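/- Let J : R^n → R be convex differentiable with L-Lipschitz gradient, X compact convex, ε > 0, ϱ = 2/(L+2ε), and x_{k+1} = Π_X(x_k - ϱ∇J(x_k)) with x_0 ∈ X. Then J(x_k) converges to min_{x ∈ X} J(x) as k → ∞. -/

import Mathlib

/-!
A projected gradient step `b = Π_X (a - ϱ ∇J a)` satisfies the variational inequality
`⟪a - ϱ ∇J a - b, z - b⟫ ≤ 0` for all `z ∈ X`. Tested at `z = a` and combined with the descent
lemma for a gradient that is `L`-Lipschitz, it gives the sufficient decrease
`J b ≤ J a - (1/ϱ - L/2) ‖b - a‖²`, and `1/ϱ - L/2 = ε`. Tested at a minimiser `z = x*` and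
combined with the first-order inequality of convexity, it bounds the gap `J a - J x*` by
`(‖∇J a‖ + ‖x* - b‖/ϱ) ‖b - a‖`, which is `O(‖b - a‖)` on the compact set `X`. The values
`J (x k)` decrease and are bounded below, so the steps tend to zero, and with them the gap.
-/

open Set Filter Topology AffineMap
open scoped RealInnerProductSpace

theorem tendsto_of_sufficient_decrease {f d : ℕ → ℝ} {m ε C : ℝ} (hε : 0 < ε)
    (hd : ∀ k, 0 ≤ d k) (hm : ∀ k, m ≤ f k) (hdec : ∀ k, f (k + 1) ≤ f k - ε * d k ^ 2)
    (hgap : ∀ k, f k - m ≤ C * d k) : Tendsto f atTop (𝓝 m) := by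
  have hanti : Antitone f :=
    antitone_nat_of_succ_le fun k => by nlinarith [hdec k, sq_nonneg (d k)]
  have hconv : Tendsto f atTop (𝓝 (⨅ k, f k)) :=
    tendsto_atTop_ciInf hanti ⟨m, by rintro _ ⟨k, rfl⟩; exact hm k⟩
  have hdrop : Tendsto (fun k => (f k - f (k + 1)) / ε) atTop (𝓝 0) := by
    simpa using (hconv.sub (hconv.comp (tendsto_add_atTop_nat 1))).div_const ε
  have hsq : Tendsto (fun k => d k ^ 2) atTop (𝓝 0) :=
    squeeze_zero (fun k => sq_nonneg _)
      (fun k => by rw [le_div_iff₀ hε]; linarith [hdec k]) hdrop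
  have hd0 : Tendsto d atTop (𝓝 0) := by
    simpa [Real.sqrt_sq (hd _)] using hsq.sqrt
  have hgap0 : Tendsto (fun k => f k - m) atTop (𝓝 0) :=
    squeeze_zero (fun k => sub_nonneg.2 (hm k)) hgap (by simpa using hd0.const_mul C)
  simpa using hgap0.add_const m

variable {E : Type*} [NormedAddCommGroup E] [InnerProductSpace ℝ E]

theorem real_inner_le_zero_of_forall_norm_sub_le {K : Set E} (hK : Convex ℝ K) {u v : E}
    (hv : v ∈ K) (hmin : ∀ z ∈ K, ‖v - u‖ ≤ ‖z - u‖) : ∀ z ∈ K, ⟪u - v, z - v⟫ ≤ 0 := by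
  have : Nonempty K := ⟨⟨v, hv⟩⟩
  refine (norm_eq_iInf_iff_real_inner_le_zero hK hv).1 (le_antisymm ?_ ?_)
  · exact le_ciInf fun z => by simpa only [norm_sub_rev] using hmin z z.2
  · exact ciInf_le ⟨0, forall_mem_range.2 fun _ => norm_nonneg _⟩ (⟨v, hv⟩ : K)

variable [CompleteSpace E] {J : E → ℝ} {J' : E → E}

theorem HasGradientAt.hasDerivAt_comp_lineMap {g p q : E} {t : ℝ}
    (h : HasGradientAt J g (lineMap p q t)) :
    HasDerivAt (fun s : ℝ => J (lineMap p q s)) ⟪g, q - p⟫ t :=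
  h.hasFDerivAt.comp_hasDerivAt t hasDerivAt_lineMap

theorem ConvexOn.inner_le_sub_of_hasGradientAt (hJ : ConvexOn ℝ univ J) {g p : E}
    (hg : HasGradientAt J g p) (q : E) : ⟪g, q - p⟫ ≤ J q - J p := by
  have hline : ConvexOn ℝ univ fun t : ℝ => J (lineMap p q t) :=
    hJ.comp_affineMap (lineMap p q)
  have hderiv := HasGradientAt.hasDerivAt_comp_lineMap (q := q) (t := 0) (by simpa using hg)
  simpa [slope_def_field] using hline.le_slope_of_hasDerivAt trivial trivial one_pos hderiv

theorem le_add_inner_add_sq_of_lipschitz_gradient {L : ℝ}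
    (hgrad : ∀ x, HasGradientAt J (J' x) x) (hLip : ∀ x y, ‖J' x - J' y‖ ≤ L * ‖x - y‖) (p q : E) :
    J q ≤ J p + ⟪J' p, q - p⟫ + L / 2 * ‖q - p‖ ^ 2 := by
  set φ : ℝ → ℝ := fun t => J (lineMap p q t) - t * ⟪J' p, q - p⟫ - L / 2 * t ^ 2 * ‖q - p‖ ^ 2
  set φ' : ℝ → ℝ := fun t => ⟪J' (lineMap p q t), q - p⟫ - ⟪J' p, q - p⟫ - L * t * ‖q - p‖ ^ 2
  have hφ : ∀ t, HasDerivAt φ (φ' t) t := fun t => by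
    have hJ : HasDerivAt (fun s => J (lineMap p q s)) ⟪J' (lineMap p q t), q - p⟫ t :=
      (hgrad _).hasDerivAt_comp_lineMap
    have hlin := (hasDerivAt_id' t).mul_const ⟪J' p, q - p⟫
    have hquad := ((hasDerivAt_pow 2 t).const_mul (L / 2)).mul_const (‖q - p‖ ^ 2)
    exact ((hJ.sub hlin).sub hquad).congr_deriv (by simp only [φ']; ring)
  obtain ⟨c, hc, hslope⟩ := exists_hasDerivAt_eq_slope φ φ' one_pos
    (continuous_iff_continuousAt.2 fun t => (hφ t).continuousAt).continuousOn fun t _ => hφ t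
  have hφ'c : φ' c ≤ 0 := by
    have hnear : ‖J' (lineMap p q c) - J' p‖ ≤ L * (c * ‖q - p‖) := by
      simpa [← dist_eq_norm, dist_lineMap_left, abs_of_pos hc.1, dist_comm]
        using hLip (lineMap p q c) p
    calc φ' c = ⟪J' (lineMap p q c) - J' p, q - p⟫ - L * c * ‖q - p‖ ^ 2 := by
          simp only [φ', inner_sub_left]
      _ ≤ ‖J' (lineMap p q c) - J' p‖ * ‖q - p‖ - L * c * ‖q - p‖ ^ 2 := by
          gcongr; exact real_inner_le_norm _ _
      _ ≤ L * (c * ‖q - p‖) * ‖q - p‖ - L * c * ‖q - p‖ ^ 2 := by gcongr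
      _ = 0 := by ring
  have : φ 1 ≤ φ 0 := by linarith [hslope ▸ hφ'c]
  simp only [φ, lineMap_apply_one, lineMap_apply_zero, one_mul, one_pow, mul_one, zero_mul,
    sub_zero, zero_pow two_ne_zero, mul_zero] at this
  linarith

theorem le_sub_sq_of_projected_gradient_step {L ϱ : ℝ} (hgrad : ∀ x, HasGradientAt J (J' x) x)
    (hLip : ∀ x y, ‖J' x - J' y‖ ≤ L * ‖x - y‖) (hϱ : 0 < ϱ) {a b : E}
    (hvi : ⟪a - ϱ • J' a - b, a - b⟫ ≤ 0) : J b ≤ J a - (1 / ϱ - L / 2) * ‖b - a‖ ^ 2 := by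
  have hexpand : ⟪a - ϱ • J' a - b, a - b⟫ = ‖b - a‖ ^ 2 + ϱ * ⟪J' a, b - a⟫ := by
    rw [← real_inner_self_eq_norm_sq]
    simp only [inner_sub_left, inner_sub_right, real_inner_smul_right, real_inner_comm]
    ring
  have hinner : ⟪J' a, b - a⟫ ≤ -‖b - a‖ ^ 2 / ϱ := by
    rw [le_div_iff₀ hϱ]; linarith
  calc J b ≤ J a + ⟪J' a, b - a⟫ + L / 2 * ‖b - a‖ ^ 2 :=
        le_add_inner_add_sq_of_lipschitz_gradient hgrad hLip a b
    _ ≤ J a + -‖b - a‖ ^ 2 / ϱ + L / 2 * ‖b - a‖ ^ 2 := by gcongr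
    _ = J a - (1 / ϱ - L / 2) * ‖b - a‖ ^ 2 := by ring

theorem sub_le_of_projected_gradient_step (hJ : ConvexOn ℝ univ J) {ϱ : ℝ} (hϱ : 0 < ϱ)
    {g a b z : E} (hg : HasGradientAt J g a) (hvi : ⟪a - ϱ • g - b, z - b⟫ ≤ 0) :
    J a - J z ≤ (‖g‖ + ‖z - b‖ / ϱ) * ‖b - a‖ := by
  have hexpand : ⟪a - ϱ • g - b, z - b⟫ = ϱ * ⟪g, b - z⟫ - ⟪b - a, z - b⟫ := by
    simp only [inner_sub_left, inner_sub_right, real_inner_smul_right, real_inner_comm]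
    ring
  have hfar : ⟪g, b - z⟫ ≤ ‖z - b‖ / ϱ * ‖b - a‖ := by
    rw [div_mul_eq_mul_div, le_div_iff₀ hϱ]
    linarith [real_inner_le_norm (b - a) (z - b)]
  have hnear : ⟪g, a - b⟫ ≤ ‖g‖ * ‖b - a‖ := norm_sub_rev a b ▸ real_inner_le_norm g (a - b)
  calc J a - J z ≤ ⟪g, a - z⟫ := by
        rw [← neg_sub z a, inner_neg_right]
        linarith [hJ.inner_le_sub_of_hasGradientAt hg z]
    _ = ⟪g, a - b⟫ + ⟪g, b - z⟫ := by rw [← inner_add_right, sub_add_sub_cancel]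
    _ ≤ (‖g‖ + ‖z - b‖ / ϱ) * ‖b - a‖ := by linarith

theorem stmt_4_general {n : ℕ} (J : EuclideanSpace ℝ (Fin n) → ℝ)
    (J' : EuclideanSpace ℝ (Fin n) → EuclideanSpace ℝ (Fin n))
    (hconv : ConvexOn ℝ Set.univ J)
    (hgrad : ∀ x, HasGradientAt J (J' x) x)
    (L ε ϱ : ℝ) (hL : 0 ≤ L) (hε : 0 < ε) (hϱ : ϱ = 2 / (L + 2 * ε))
    (hLip : ∀ x y, ‖J' x - J' y‖ ≤ L * ‖x - y‖)
    (X : Set (EuclideanSpace ℝ (Fin n)))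
    (hXcomp : IsCompact X) (hXconv : Convex ℝ X)
    (x : ℕ → EuclideanSpace ℝ (Fin n)) (hx0 : x 0 ∈ X)
    (hmem : ∀ k, x (k + 1) ∈ X)
    (hproj : ∀ k, ∀ z ∈ X, ‖x (k + 1) - (x k - ϱ • J' (x k))‖ ≤ ‖z - (x k - ϱ • J' (x k))‖) :
    Filter.Tendsto (fun k => J (x k)) Filter.atTop (nhds (sInf (J '' X))) := by
  have hϱpos : 0 < ϱ := hϱ ▸ by positivity
  have hstep : 1 / ϱ - L / 2 = ε := by rw [hϱ]; field_simp; ring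
  have hxX : ∀ k, x k ∈ X := fun k => k.casesOn hx0 hmem
  have hvi k := real_inner_le_zero_of_forall_norm_sub_le hXconv (hmem k) (hproj k)
  have hJcont : Continuous J := continuous_iff_continuousAt.2 fun z => (hgrad z).continuousAt
  obtain ⟨⟨xs, hxsX, hxs⟩, hmin⟩ :=
    (hXcomp.image hJcont).isLeast_sInf (Set.Nonempty.image J ⟨_, hx0⟩)
  obtain ⟨G, hG⟩ := hXcomp.exists_bound_of_continuousOn
    (LipschitzWith.of_dist_le_mul (f := J') (K := ⟨L, hL⟩) fun a b => by
      rw [dist_eq_norm, dist_eq_norm]; exact hLip a b).continuous.continuousOn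
  rw [← hxs] at hmin ⊢
  refine tendsto_of_sufficient_decrease (d := fun k => ‖x (k + 1) - x k‖)
    (C := G + Metric.diam X / ϱ) hε (fun _ => norm_nonneg _)
    (fun k => hmin ⟨x k, hxX k, rfl⟩) (fun k => ?_) (fun k => ?_)
  · exact hstep ▸ le_sub_sq_of_projected_gradient_step hgrad hLip hϱpos (hvi k (x k) (hxX k))
  · refine (sub_le_of_projected_gradient_step hconv hϱpos (hgrad _) (hvi k xs hxsX)).trans ?_
    gcongr
    · exact hG _ (hxX k)
    · exact dist_eq_norm xs _ ▸ Metric.dist_le_diam_of_mem hXcomp.isBounded hxsX (hmem k)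

/-- Convergence of projected gradient descent: `J(x_k)` converges to the minimum of `J`
over the compact convex set `X`. -/
theorem stmt_4 {n : ℕ} (J : EuclideanSpace ℝ (Fin n) → ℝ)
    (J' : EuclideanSpace ℝ (Fin n) → EuclideanSpace ℝ (Fin n))
    (hconv : ConvexOn ℝ Set.univ J)
    (hgrad : ∀ x, HasGradientAt J (J' x) x)
    (L ε ϱ : ℝ) (hL : 0 ≤ L) (hε : 0 < ε) (hϱ : ϱ = 2 / (L + 2 * ε))
    (hLip : ∀ x y, ‖J' x - J' y‖ ≤ L * ‖x - y‖)
    (X : Set (EuclideanSpace ℝ (Fin n)))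
    (hXne : X.Nonempty) (hXcomp : IsCompact X) (hXconv : Convex ℝ X)
    (x : ℕ → EuclideanSpace ℝ (Fin n)) (hx0 : x 0 ∈ X)
    (hmem : ∀ k, x (k + 1) ∈ X)
    (hproj : ∀ k, ∀ z ∈ X, ‖x (k + 1) - (x k - ϱ • J' (x k))‖ ≤ ‖z - (x k - ϱ • J' (x k))‖) :
    Filter.Tendsto (fun k => J (x k)) Filter.atTop (nhds (sInf (J '' X))) :=
  stmt_4_general J J' hconv hgrad L ε ϱ hL hε hϱ hLip X hXcomp hXconv x hx0 hmem hproj
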